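/- Let F : A → B be a *-functor between C*-categories which is fully faithful and such that every object of B is unitarily isomorphic to an object in the image of F. Then F is a unitary equivalence: there exist a *-functor G : B → A and natural isomorphisms GF ≅ id_A and FG ≅ id_B whose components are unitary morphisms. -/
import Mathlib


open CategoryTheory

universe u v

/-- A (unital) C*-category: a category enriched in complex Banach spaces with
submultiplicative composition and an antilinear, contravariant, object-fixing
involution `star'` satisfying the C*-identity and positivity (in the complex
form: every `f ≫ f*` is of the form `g ≫ g*` for an endomorphism `g`). -/
structure CStarCategory where
  C : Type u
  [cat : Category.{v} C]
  [normed : ∀ x y : C, NormedAddCommGroup (x ⟶ y)]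
  [nspace : ∀ x y : C, NormedSpace ℂ (x ⟶ y)]
  [complete : ∀ x y : C, CompleteSpace (x ⟶ y)]
  star' : ∀ {x y : C}, (x ⟶ y) → (y ⟶ x)
  star_star : ∀ {x y : C} (f : x ⟶ y), star' (star' f) = f
  star_comp : ∀ {x y z : C} (f : x ⟶ y) (g : y ⟶ z), star' (f ≫ g) = star' g ≫ star' f
  star_add : ∀ {x y : C} (f g : x ⟶ y), star' (f + g) = star' f + star' g
  star_smul : ∀ {x y : C} (c : ℂ) (f : x ⟶ y), star' (c • f) = (starRingEnd ℂ c) • star' f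
  add_comp : ∀ {x y z : C} (f f' : x ⟶ y) (g : y ⟶ z), (f + f') ≫ g = f ≫ g + f' ≫ g
  comp_add : ∀ {x y z : C} (f : x ⟶ y) (g g' : y ⟶ z), f ≫ (g + g') = f ≫ g + f ≫ g'
  smul_comp : ∀ {x y z : C} (c : ℂ) (f : x ⟶ y) (g : y ⟶ z), (c • f) ≫ g = c • (f ≫ g)
  comp_smul : ∀ {x y z : C} (c : ℂ) (f : x ⟶ y) (g : y ⟶ z), f ≫ (c • g) = c • (f ≫ g)
  norm_comp : ∀ {x y z : C} (f : x ⟶ y) (g : y ⟶ z), ‖f ≫ g‖ ≤ ‖f‖ * ‖g‖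
  cstar_id : ∀ {x y : C} (f : x ⟶ y), ‖f ≫ star' f‖ = ‖f‖ ^ 2
  positivity : ∀ {x y : C} (f : x ⟶ y), ∃ g : x ⟶ x, f ≫ star' f = g ≫ star' g

attribute [instance] CStarCategory.cat CStarCategory.normed CStarCategory.nspace
  CStarCategory.complete

/-- A morphism `u : x ⟶ y` in a C*-category is unitary if `u* u = 1ₓ` and `u u* = 1_y`. -/
def CStarCategory.Unitary (A : CStarCategory) {x y : A.C} (u : x ⟶ y) : Prop :=
  u ≫ A.star' u = 𝟙 x ∧ A.star' u ≫ u = 𝟙 y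

/-- A *-functor between C*-categories: a `ℂ`-linear functor commuting with the involutions. -/
structure StarFunctor (A B : CStarCategory) where
  F : A.C ⥤ B.C
  map_add : ∀ {x y : A.C} (f g : x ⟶ y), F.map (f + g) = F.map f + F.map g
  map_smul : ∀ {x y : A.C} (c : ℂ) (f : x ⟶ y), F.map (c • f) = c • F.map f
  map_star : ∀ {x y : A.C} (f : x ⟶ y), F.map (A.star' f) = B.star' (F.map f)

/-- A *-functor is a unitary equivalence if it admits a quasi-inverse *-functor with
both natural isomorphisms having unitary components. -/
def IsUnitaryEquivalence {A B : CStarCategory} (F : StarFunctor A B) : Prop :=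
  ∃ G : StarFunctor B A,
    (∃ u : ∀ x : A.C, (G.F.obj (F.F.obj x) ⟶ x),
      (∀ x, A.Unitary (u x)) ∧
      ∀ {x y : A.C} (f : x ⟶ y), G.F.map (F.F.map f) ≫ u y = u x ≫ f) ∧
    (∃ v : ∀ y : B.C, (F.F.obj (G.F.obj y) ⟶ y),
      (∀ y, B.Unitary (v y)) ∧
      ∀ {x y : B.C} (g : x ⟶ y), F.F.map (G.F.map g) ≫ v y = v x ≫ g)

/-- A *-functor between C*-categories which is fully faithful and such that every
object of the target is unitarily isomorphic to an object in the image is a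
unitary equivalence. -/
theorem unitaryEquivalence_of_fullyFaithful_unitarilyEssSurj
    {A B : CStarCategory} (F : StarFunctor A B)
    (hff : ∀ x y : A.C, Function.Bijective (fun f : x ⟶ y => F.F.map f))
    (hes : ∀ y : B.C, ∃ (x : A.C) (u : F.F.obj x ⟶ y), B.Unitary u) :
    IsUnitaryEquivalence F := by
  classical
  choose x0 v0 hv using hes
  have hFinj : ∀ {x y : A.C} (f g : x ⟶ y), F.F.map f = F.F.map g → f = g :=
    fun f g h => (hff _ _).1 h
  let einv : ∀ {x y : A.C}, (F.F.obj x ⟶ F.F.obj y) → (x ⟶ y) :=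
    fun {x y} g => (Equiv.ofBijective _ (hff x y)).symm g
  have hFe : ∀ {x y : A.C} (g : F.F.obj x ⟶ F.F.obj y), F.F.map (einv g) = g :=
    fun {x y} g => (Equiv.ofBijective _ (hff x y)).apply_symm_apply g
  have hcancel : ∀ {y z : B.C} (g : y ⟶ z),
      B.star' (v0 y) ≫ v0 y ≫ g = g := fun {y z} g => by
    conv_lhs => rw [← Category.assoc, (hv y).2]
    rw [Category.id_comp]
  let GF : B.C ⥤ A.C :=
    { obj := x0
      map := fun {x y} g => einv (v0 x ≫ g ≫ B.star' (v0 y))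
      map_id := fun x => hFinj _ _ (by
        rw [hFe, F.F.map_id, Category.id_comp, (hv x).1])
      map_comp := fun {x y z} f g => hFinj _ _ (by
        rw [F.F.map_comp, hFe, hFe, hFe]
        simp only [Category.assoc, hcancel]) }
  refine ⟨{ F := GF
            map_add := fun {x y} f g => hFinj _ _ (by
              rw [F.map_add, hFe, hFe, hFe, B.add_comp, B.comp_add])
            map_smul := fun {x y} c f => hFinj _ _ (by
              rw [F.map_smul, hFe, hFe, B.smul_comp, B.comp_smul])
            map_star := fun {x y} f => hFinj _ _ (by
              rw [F.map_star, hFe, hFe, B.star_comp, B.star_comp, B.star_star,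
                Category.assoc]) },
    ⟨fun x => einv (v0 (F.F.obj x)), fun x => ?_, fun {x y} f => hFinj _ _ ?_⟩,
    ⟨v0, hv, fun {x y} g => ?_⟩⟩
  · constructor
    · apply hFinj
      rw [F.F.map_comp, F.map_star, hFe, (hv _).1, F.F.map_id]
    · apply hFinj
      rw [F.F.map_comp, F.map_star, hFe, (hv _).2, F.F.map_id]
  · show F.F.map (GF.map (F.F.map f) ≫ _) = F.F.map (_ ≫ f)
    rw [F.F.map_comp, F.F.map_comp, hFe, hFe, hFe]
    simp only [Category.assoc]
    rw [(hv _).2, Category.comp_id]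
  · show F.F.map (GF.map g) ≫ v0 y = v0 x ≫ g
    show F.F.map (einv _) ≫ v0 y = v0 x ≫ g
    rw [hFe]
    simp only [Category.assoc]
    rw [(hv y).2, Category.comp_id]
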